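/- Let X be a set, D a premetric on X, M_n ⊆ X a nonempty finite set, and ≾ₙ a preorder on X whose weak lower contour sets L(x) = {t : t ≾ₙ x} are closed in the topology τ_U generated by the sets U_r = ⋃_{G* ∈ M_n} B_r(G*) for r > 0 (together with ∅ and X). Then the distance linear order <ₙᴰ extends the strict part of ≾ₙ: if x ≺ₙ y then min_{G*∈M_n} D(G*, y) < min_{G*∈M_n} D(G*, x). -/
import Mathlib


/-- A premetric: nonnegative and zero on the diagonal. -/
def IsPremetric {X : Type*} (D : X → X → ℝ) : Prop :=
  (∀ x y, 0 ≤ D x y) ∧ (∀ x, D x x = 0)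

/-- The open ball `B_r(x) = {y : D x y < r}`. -/
def ball {X : Type*} (D : X → X → ℝ) (x : X) (r : ℝ) : Set X := {y | D x y < r}

/-- The topology `τ_U` generated by the sets `U_r = ⋃_{G* ∈ M} B_r(G*)`, `r > 0`. -/
def tauU {X : Type*} (D : X → X → ℝ) (M : Finset X) : TopologicalSpace X :=
  TopologicalSpace.generateFrom {U | ∃ r > (0 : ℝ), U = ⋃ G ∈ M, ball D G r}

lemma key_open {X : Type*} (D : X → X → ℝ) (hD : IsPremetric D)
    (M : Finset X) (hM : M.Nonempty) (y : X) {U : Set X}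
    (hU : TopologicalSpace.GenerateOpen {U | ∃ r > (0 : ℝ), U = ⋃ G ∈ M, ball D G r} U) :
    y ∈ U → ∃ r > (0 : ℝ), y ∈ (⋃ G ∈ M, ball D G r) ∧ (⋃ G ∈ M, ball D G r) ⊆ U := by
  induction hU with
  | basic s hs =>
    intro hy
    obtain ⟨r, hr, rfl⟩ := hs
    exact ⟨r, hr, hy, subset_rfl⟩
  | univ =>
    intro _
    obtain ⟨G, hG, hGmin⟩ := M.exists_min_image (fun G => D G y) hM
    refine ⟨D G y + 1, by linarith [hD.1 G y], ?_, Set.subset_univ _⟩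
    exact Set.mem_biUnion hG (by simp [ball])
  | inter s t _ _ ihs iht =>
    rintro ⟨hys, hyt⟩
    obtain ⟨r1, hr1, hy1, hsub1⟩ := ihs hys
    obtain ⟨r2, hr2, hy2, hsub2⟩ := iht hyt
    have mono : ∀ a b : ℝ, a ≤ b → (⋃ G ∈ M, ball D G a) ⊆ ⋃ G ∈ M, ball D G b := by
      intro a b hab
      refine Set.iUnion₂_mono fun G _ z hz => lt_of_lt_of_le hz hab
    rcases le_total r1 r2 with h | h
    · exact ⟨r1, hr1, hy1, fun z hz => ⟨hsub1 hz, hsub2 (mono r1 r2 h hz)⟩⟩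
    · exact ⟨r2, hr2, hy2, fun z hz => ⟨hsub1 (mono r2 r1 h hz), hsub2 hz⟩⟩
  | sUnion S _ ih =>
    rintro ⟨s, hs, hys⟩
    obtain ⟨r, hr, h1, h2⟩ := ih s hs hys
    exact ⟨r, hr, h1, h2.trans (Set.subset_sUnion_of_mem hs)⟩

theorem stmt_8 {X : Type*} (D : X → X → ℝ) (hD : IsPremetric D)
    (M : Finset X) (hM : M.Nonempty)
    (pre : X → X → Prop) (hrefl : Reflexive pre) (htrans : Transitive pre)
    (hlsc : ∀ x : X, @IsClosed X (tauU D M) {t | pre t x}) :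
    ∀ x y : X, pre x y → ¬ pre y x →
      M.inf' hM (fun G => D G y) < M.inf' hM (fun G => D G x) := by
  intro x y _ hyx
  have hopen : TopologicalSpace.GenerateOpen {U | ∃ r > (0 : ℝ), U = ⋃ G ∈ M, ball D G r}
      {t | pre t x}ᶜ := (hlsc x).isOpen_compl
  have hy : y ∈ ({t | pre t x}ᶜ : Set X) := hyx
  obtain ⟨r, hr, hyU, hUsub⟩ := key_open D hD M hM y hopen hy
  have hx : x ∉ (⋃ G ∈ M, ball D G r) := fun h => (hUsub h) (hrefl x)
  obtain ⟨G, hG, hGy⟩ := Set.mem_iUnion₂.mp hyU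
  have h1 : M.inf' hM (fun G => D G y) ≤ D G y := Finset.inf'_le _ hG
  have h2 : r ≤ M.inf' hM (fun G => D G x) := by
    rw [Finset.le_inf'_iff]
    intro b hb
    by_contra hlt
    exact hx (Set.mem_biUnion hb (lt_of_not_ge hlt))
  calc M.inf' hM (fun G => D G y) ≤ D G y := h1
    _ < r := hGy
    _ ≤ _ := h2
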